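/- For all n ≥ 2, the identity ∑_{h=0}^{n} [n choose h]_q + (q^n - 1) ∑_{h=0}^{n-1} [n-1 choose h]_q = ∑_{h=0}^{n} q^{n-h} [n choose h]_q holds as polynomials in q. -/

import Mathlib

/-!
Termwise, `q^{n-h} [n choose h]_q = [n choose h]_q + (q^n - 1) [n-1 choose h]_q` for `h ≤ n`:
multiplied by `q^h` this is the absorption identity
`(q^n - q^h) [n choose h]_q = q^h (q^n - 1) [n-1 choose h]_q`, which follows from the ratio
formula `(q^n - q^k) [n choose k]_q = q^k (q^{k+1} - 1) [n choose k+1]_q`, proved by induction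
on `n` from the Pascal recursion. Summing over `h` gives the identity since `[n-1 choose n]_q = 0`.
-/

open Finset Polynomial

/-- The Gaussian (q-)binomial coefficient `[n choose k]_q` as a polynomial in `q`. -/
noncomputable def qbinom : ℕ → ℕ → Polynomial ℤ
  | _, 0 => 1
  | 0, _ + 1 => 0
  | n + 1, k + 1 => qbinom n k + Polynomial.X ^ (k + 1) * qbinom n (k + 1)

@[simp]
lemma qbinom_zero_right (n : ℕ) : qbinom n 0 = 1 := by
  cases n <;> rfl

lemma qbinom_succ_succ (n k : ℕ) :
    qbinom (n + 1) (k + 1) = qbinom n k + X ^ (k + 1) * qbinom n (k + 1) :=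
  rfl

lemma qbinom_eq_zero_of_lt {n k : ℕ} (h : n < k) : qbinom n k = 0 := by
  induction n generalizing k with
  | zero =>
    cases k with
    | zero => omega
    | succ k => rfl
  | succ n ih =>
    cases k with
    | zero => omega
    | succ k => rw [qbinom_succ_succ, ih (by omega), ih (by omega), mul_zero, add_zero]

lemma pow_sub_pow_mul_qbinom (n k : ℕ) :
    (X ^ n - X ^ k) * qbinom n k = X ^ k * ((X ^ (k + 1) - 1) * qbinom n (k + 1)) := by
  induction n generalizing k with
  | zero =>
    rcases k with _ | k <;> simp [qbinom_eq_zero_of_lt]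
  | succ n ih =>
    cases k with
    | zero =>
      have h := ih 0
      simp only [qbinom_zero_right, qbinom_succ_succ, pow_zero, zero_add] at *
      linear_combination X * h
    | succ k =>
      simp only [qbinom_succ_succ]
      linear_combination X * ih k + X ^ (k + 2) * ih (k + 1)

lemma pow_sub_pow_mul_qbinom_succ (n h : ℕ) :
    (X ^ (n + 1) - X ^ h) * qbinom (n + 1) h = X ^ h * ((X ^ (n + 1) - 1) * qbinom n h) := by
  cases h with
  | zero => simp
  | succ k =>
    rw [qbinom_succ_succ]
    linear_combination X * pow_sub_pow_mul_qbinom n k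

lemma X_pow_sub_mul_qbinom_succ {n h : ℕ} (hh : h ≤ n + 1) :
    (X : ℤ[X]) ^ (n + 1 - h) * qbinom (n + 1) h
      = qbinom (n + 1) h + (X ^ (n + 1) - 1) * qbinom n h := by
  apply mul_left_cancel₀ (pow_ne_zero h (X_ne_zero : (X : ℤ[X]) ≠ 0))
  have hpow : (X : ℤ[X]) ^ h * X ^ (n + 1 - h) = X ^ (n + 1) := by
    rw [← pow_add, Nat.add_sub_cancel' hh]
  linear_combination qbinom (n + 1) h * hpow + pow_sub_pow_mul_qbinom_succ n h

theorem qbinom_sum_identity_general (n : ℕ) :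
    (∑ h ∈ Finset.range (n + 1), qbinom n h) +
        ((Polynomial.X : Polynomial ℤ) ^ n - 1) * ∑ h ∈ Finset.range n, qbinom (n - 1) h =
      ∑ h ∈ Finset.range (n + 1), (Polynomial.X : Polynomial ℤ) ^ (n - h) * qbinom n h := by
  cases n with
  | zero => simp
  | succ n =>
    rw [sum_congr rfl fun h hh => X_pow_sub_mul_qbinom_succ (mem_range_succ_iff.mp hh),
      sum_add_distrib, ← mul_sum, sum_range_succ (qbinom n) (n + 1),
      qbinom_eq_zero_of_lt n.lt_succ_self, add_zero, Nat.add_sub_cancel]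

/-- For `n ≥ 2`,
`∑_{h=0}^{n} [n choose h]_q + (q^n - 1) ∑_{h=0}^{n-1} [n-1 choose h]_q
  = ∑_{h=0}^{n} q^{n-h} [n choose h]_q`. -/
theorem qbinom_sum_identity (n : ℕ) (hn : 2 ≤ n) :
    (∑ h ∈ Finset.range (n + 1), qbinom n h) +
        ((Polynomial.X : Polynomial ℤ) ^ n - 1) * ∑ h ∈ Finset.range n, qbinom (n - 1) h =
      ∑ h ∈ Finset.range (n + 1), (Polynomial.X : Polynomial ℤ) ^ (n - h) * qbinom n h :=
  qbinom_sum_identity_general n
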